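/- Let Λ be a σ-finite measure on 𝒫 satisfying conditions (1.4) and (1.5). Then ∫_𝒫 Σ_{n≥1} e^{θ x_n} (1 ∧ x_n²) Λ(dx) < ∞, where terms of the sum with x_n = −∞ are set to 0. -/

import Mathlib

open MeasureTheory ENNReal Filter

noncomputable section

/-- The space `𝒫` of nonincreasing sequences in `[-∞, ∞)` tending to `-∞`,
equipped (as a subtype of `ℕ → EReal`) with the σ-algebra generated by the coordinate maps. -/
def calP : Set (ℕ → EReal) :=
  {x | Antitone x ∧ (∀ n, x n ≠ ⊤) ∧ Tendsto x atTop (nhds ⊥)}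

/-- `e^{θ y}`, with the convention that it is `0` when `y = -∞`, even for `θ = 0`. -/
def eexp (θ : ℝ) (y : EReal) : ℝ≥0∞ :=
  if y = ⊥ then 0 else ENNReal.ofReal (Real.exp (θ * y.toReal))

/-- `⟨x, e_θ⟩ = Σ_{n ≥ 1} e^{θ x_n}` (the sequence is indexed from `0` in Lean). -/
def ip (θ : ℝ) (x : ℕ → EReal) : ℝ≥0∞ := ∑' n, eexp θ (x n)

/-- Condition (1.4): `∫ (1 ∧ x₁²) Λ(dx) < ∞`, with `1 ∧ x₁² = 1` when `x₁ = -∞`. -/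
def cond14 (Λ : Measure calP) : Prop :=
  ∫⁻ x : calP, (if x.1 0 = ⊥ then 1
    else 1 ⊓ ENNReal.ofReal ((x.1 0).toReal ^ 2)) ∂Λ < ∞

/-- Condition (1.5): `∫ (1_{x₁>1} e^{θ x₁} + Σ_{k≥2} e^{θ x_k}) Λ(dx) < ∞`. -/
def cond15 (θ : ℝ) (Λ : Measure calP) : Prop :=
  ∫⁻ x : calP, ((if (1 : EReal) < x.1 0 then eexp θ (x.1 0) else 0)
    + ∑' k, eexp θ (x.1 (k + 1))) ∂Λ < ∞

/-!
Pointwise, only the first term of the sum needs care: when `x₁ > 1` it is bounded by the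
`1_{x₁>1} e^{θ x₁}` part of (1.5), and when `x₁ ≤ 1` the factor `e^{θ x₁}` is at most `e^θ`,
so the term is bounded by `e^θ (1 ∧ x₁²)`, controlled by (1.4). Every later term is at most
`e^{θ x_k}`, controlled by the sum in (1.5).
-/

lemma measurable_eexp (θ : ℝ) : Measurable (eexp θ) :=
  Measurable.ite (measurableSet_singleton ⊥) measurable_const
    (ENNReal.measurable_ofReal.comp (Real.measurable_exp.comp
      (measurable_const.mul measurable_ereal_toReal)))

lemma measurable_cond15_integrand (θ : ℝ) : Measurable fun x : calP =>
    (if (1 : EReal) < x.1 0 then eexp θ (x.1 0) else 0) + ∑' k, eexp θ (x.1 (k + 1)) := by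
  have hcoord (n : ℕ) : Measurable fun x : calP => x.1 n :=
    (measurable_pi_apply n).comp measurable_subtype_coe
  exact (((measurable_eexp θ).comp (hcoord 0)).ite
    (measurableSet_lt measurable_const (hcoord 0)) measurable_const).add
    (.tsum fun k => (measurable_eexp θ).comp (hcoord (k + 1)))

lemma eexp_le_ofReal_exp {θ : ℝ} (hθ : 0 ≤ θ) {y : EReal} (hy : y ≤ 1) :
    eexp θ y ≤ ENNReal.ofReal (Real.exp θ) := by
  unfold eexp
  split_ifs with hbot
  · exact bot_le
  · have hy' : y.toReal ≤ 1 := by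
      simpa using EReal.toReal_le_toReal hy hbot (EReal.coe_ne_top 1)
    gcongr
    nlinarith

lemma eexp_mul_min_sq_le {θ : ℝ} (hθ : 0 ≤ θ) (y : EReal) :
    eexp θ y * (1 ⊓ ENNReal.ofReal (y.toReal ^ 2)) ≤
      (if 1 < y then eexp θ y else 0) +
        ENNReal.ofReal (Real.exp θ) * (if y = ⊥ then 1 else 1 ⊓ ENNReal.ofReal (y.toReal ^ 2)) := by
  by_cases hy : 1 < y
  · rw [if_pos hy]
    exact (mul_le_of_le_one_right' inf_le_left).trans le_self_add
  by_cases hbot : y = ⊥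
  · simp [eexp, hbot]
  rw [if_neg hy, if_neg hbot, zero_add]
  gcongr
  exact eexp_le_ofReal_exp hθ (not_lt.1 hy)

lemma tsum_eexp_mul_min_sq_le {θ : ℝ} (hθ : 0 ≤ θ) (x : ℕ → EReal) :
    ∑' n, eexp θ (x n) * (1 ⊓ ENNReal.ofReal ((x n).toReal ^ 2)) ≤
      ((if 1 < x 0 then eexp θ (x 0) else 0) + ∑' k, eexp θ (x (k + 1))) +
        ENNReal.ofReal (Real.exp θ) *
          (if x 0 = ⊥ then 1 else 1 ⊓ ENNReal.ofReal ((x 0).toReal ^ 2)) := by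
  rw [tsum_eq_zero_add' ENNReal.summable, add_right_comm _ (∑' k, eexp θ (x (k + 1)))]
  gcongr ?_ + ?_
  · exact eexp_mul_min_sq_le hθ (x 0)
  · exact ENNReal.tsum_le_tsum fun k => mul_le_of_le_one_right' inf_le_left

theorem stmt7_general (θ : ℝ) (hθ : 0 ≤ θ) (Λ : Measure calP)
    (h14 : cond14 Λ) (h15 : cond15 θ Λ) :
    ∫⁻ x : calP, ∑' n, eexp θ (x.1 n) * (1 ⊓ ENNReal.ofReal ((x.1 n).toReal ^ 2)) ∂Λ
      < ∞ := by
  refine (lintegral_mono fun x : calP => tsum_eexp_mul_min_sq_le hθ x.1).trans_lt ?_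
  rw [lintegral_add_left (measurable_cond15_integrand θ),
    lintegral_const_mul' _ _ ofReal_ne_top]
  exact add_lt_top.2 ⟨h15, mul_lt_top ofReal_lt_top h14⟩

/-- `∫ Σ_{n≥1} e^{θ x_n} (1 ∧ x_n²) Λ(dx) < ∞` (terms with `x_n = -∞` vanish,
since `eexp θ ⊥ = 0`). -/
theorem stmt7 (θ : ℝ) (hθ : 0 ≤ θ) (Λ : Measure calP) [SigmaFinite Λ]
    (h14 : cond14 Λ) (h15 : cond15 θ Λ) :
    ∫⁻ x : calP, ∑' n, eexp θ (x.1 n) * (1 ⊓ ENNReal.ofReal ((x.1 n).toReal ^ 2)) ∂Λ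
      < ∞ :=
  stmt7_general θ hθ Λ h14 h15
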